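/- arXiv:1309.7018 — 3 statements merged into one kernel-verified Lean document; each statement's English description precedes it below -/
import Mathlib

section
/- In the matrix setup below, suppose in addition that I − Q is invertible over F. Then I − φ(Q) is invertible over F, and (I − φ(Q))^{−1} = −(P·J·P)·(I − P·Q·P)^{−1}·D. -/
/-!
With `E` the diagonal indicator matrix of `T`, the conditions on the rows of `J` and the
entries of `D` indexed by `T` give `Q = D J + E` and `φ(Q) = D⁻¹ J + E`. From `J (P J P) = 1`
and `P² = 1` one gets `J P J = P`; together with `E P = P E = E`, `E J = -E` and `P D⁻¹ = D⁻¹ P`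
this yields the intertwining identity `(1 - φ(Q)) P J = -P D⁻¹ (1 - Q)`. Multiplying it on the
right by `(1 - Q)⁻¹ P D` and using `(1 - P Q P)⁻¹ = P (1 - Q)⁻¹ P` exhibits the inverse.
-/

open scoped Classical

noncomputable section

section Ring

variable {R : Type*} [Ring R] {P J D D' E : R}

theorem mul_mul_eq_of_mul_conj_eq_one (hPP : P * P = 1) (hJ : J * (P * J * P) = 1) :
    J * P * J = P :=
  calc J * P * J = J * P * J * (P * P) := by rw [hPP, mul_one]
    _ = J * (P * J * P) * P := by noncomm_ring
    _ = P := by rw [hJ, one_mul]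

theorem one_sub_add_mul_eq_neg_mul_one_sub (hPP : P * P = 1) (hJ : J * (P * J * P) = 1)
    (hEP : E * P = E) (hPE : P * E = E) (hEJ : E * J = -E) (hPD' : P * D' = D' * P)
    (hD'E : D' * E = E) (hD'D : D' * D = 1) :
    (1 - (D' * J + E)) * (P * J) = -(P * D' * (1 - (D * J + E))) :=
  calc (1 - (D' * J + E)) * (P * J)
      = P * J - D' * (J * P * J) - E * P * J := by noncomm_ring
    _ = P * J - D' * P + E := by
        rw [mul_mul_eq_of_mul_conj_eq_one hPP hJ, hEP, hEJ, sub_neg_eq_add]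
    _ = -(P * D') + P * (D' * D) * J + P * (D' * E) := by
        rw [hD'D, hD'E, hPE, hPD']; noncomm_ring
    _ = -(P * D' * (1 - (D * J + E))) := by noncomm_ring

theorem one_sub_add_mul_mul_eq_one {U : R} (hPP : P * P = 1) (hJ : J * (P * J * P) = 1)
    (hEP : E * P = E) (hPE : P * E = E) (hEJ : E * J = -E) (hPD' : P * D' = D' * P)
    (hD'E : D' * E = E) (hD'D : D' * D = 1) (hU : (1 - (D * J + E)) * U = 1) :
    (1 - (D' * J + E)) * -(P * J * P * (P * U * P) * D) = 1 :=
  calc (1 - (D' * J + E)) * -(P * J * P * (P * U * P) * D)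
      = -((1 - (D' * J + E)) * (P * J) * (P * P) * U * P * D) := by noncomm_ring
    _ = P * D' * ((1 - (D * J + E)) * U) * P * D := by
        rw [one_sub_add_mul_eq_neg_mul_one_sub hPP hJ hEP hPE hEJ hPD' hD'E hD'D, hPP]
        noncomm_ring
    _ = 1 := by rw [hU, mul_one, hPD', mul_assoc D', hPP, mul_one, hD'D]

end Ring

namespace Matrix

variable {n R : Type*} [DecidableEq n]

def eraseDiagOn [Zero R] (T : Set n) (M : Matrix n n R) : Matrix n n R :=
  of fun i j => if i = j ∧ i ∈ T then 0 else M i j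

theorem map_eraseDiagOn {S : Type*} [Zero R] [Zero S] {f : R → S} (hf : f 0 = 0) (T : Set n)
    (M : Matrix n n R) : (eraseDiagOn T M).map f = eraseDiagOn T (M.map f) := by
  ext i j
  simp only [eraseDiagOn, map_apply, of_apply]
  split_ifs <;> simp [hf]

variable [Fintype n]

theorem permMatrix_mul_self_of_involutive [NonAssocSemiring R] {p : n → n}
    (hp : Function.Involutive p) :
    (hp.toPerm p).permMatrix R * (hp.toPerm p).permMatrix R = 1 := by
  rw [← permMatrix_mul, ← permMatrix_one]
  congr 1
  ext i
  exact hp i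

theorem permMatrix_mul_diagonal [NonAssocSemiring R] (σ : Equiv.Perm n) (d : n → R) :
    σ.permMatrix R * diagonal d = diagonal (d ∘ σ) * σ.permMatrix R := by
  rw [PEquiv.toMatrix_toPEquiv_mul, PEquiv.mul_toMatrix_toPEquiv]
  ext i j
  simp [diagonal_apply, Equiv.eq_symm_apply]

theorem permMatrix_mul_diagonal_eq_self [NonAssocSemiring R] {σ : Equiv.Perm n} {d : n → R}
    (hd : ∀ i, d i ≠ 0 → σ i = i) : σ.permMatrix R * diagonal d = diagonal d := by
  rw [PEquiv.toMatrix_toPEquiv_mul]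
  ext i j
  simp only [submatrix_apply, id, diagonal_apply]
  rcases eq_or_ne (d j) 0 with hj | hj
  · split_ifs with h₁ h₂ <;> simp_all
  · have hσj := hd j hj
    have hiff : σ i = j ↔ i = j :=
      ⟨fun h => σ.injective (h.trans hσj.symm), fun h => h ▸ hσj⟩
    simp only [hiff]
    split_ifs with h
    · subst h; rw [hσj]
    · rfl

theorem diagonal_mul_permMatrix_eq_self [NonAssocSemiring R] {σ : Equiv.Perm n} {d : n → R}
    (hd : ∀ i, d i ≠ 0 → σ i = i) : diagonal d * σ.permMatrix R = diagonal d := by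
  rw [PEquiv.mul_toMatrix_toPEquiv]
  ext i j
  simp only [submatrix_apply, id, diagonal_apply]
  rcases eq_or_ne (d i) 0 with hi | hi
  · simp [hi]
  · have hiff : i = σ.symm j ↔ i = j := by rw [Equiv.eq_symm_apply, hd i hi]
    simp only [hiff]

theorem inv_conj_eq_of_mul_self_eq_one [CommRing R] {P : Matrix n n R} (hP : P * P = 1)
    (A : Matrix n n R) : (P * A * P)⁻¹ = P * A⁻¹ * P := by
  rw [mul_inv_rev, mul_inv_rev, inv_eq_left_inv hP, mul_assoc]

theorem diagonal_indicator_one_mul_eq_neg [Ring R] {T : Set n} {J : Matrix n n R}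
    (hJT : ∀ i ∈ T, J i i = -1 ∧ ∀ j, j ≠ i → J i j = 0) :
    diagonal (T.indicator 1) * J = -diagonal (T.indicator 1) := by
  ext i j
  rw [diagonal_mul, neg_apply, diagonal_apply]
  by_cases hi : i ∈ T
  · obtain ⟨hJii, hJij⟩ := hJT i hi
    by_cases hij : i = j
    · subst hij; simp [hi, hJii]
    · simp [hi, hij, hJij j (Ne.symm hij)]
  · simp [hi]

theorem diagonal_mul_diagonal_indicator_one [NonAssocSemiring R] {T : Set n} {d : n → R}
    (hdT : ∀ i ∈ T, d i = 1) :
    diagonal d * diagonal (T.indicator (1 : n → R)) = diagonal (T.indicator 1) := by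
  rw [diagonal_mul_diagonal]
  congr 1
  funext i
  by_cases hi : i ∈ T <;> simp [hi, hdT]

theorem eraseDiagOn_diagonal_mul_eraseDiagOn [Ring R] {T : Set n} {d : n → R}
    {J : Matrix n n R} (hdT : ∀ i ∈ T, d i = 1)
    (hJT : ∀ i ∈ T, J i i = -1 ∧ ∀ j, j ≠ i → J i j = 0) :
    eraseDiagOn T (diagonal d) * eraseDiagOn T J = diagonal d * J + diagonal (T.indicator 1) := by
  have hdiag : eraseDiagOn T (diagonal d) = diagonal fun i => if i ∈ T then 0 else d i := by
    ext i j
    by_cases hij : i = j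
    · subst hij; simp [eraseDiagOn]
    · simp [eraseDiagOn, hij]
  ext i j
  rw [hdiag, add_apply, diagonal_mul, diagonal_mul, diagonal_apply]
  by_cases hi : i ∈ T
  · obtain ⟨hJii, hJij⟩ := hJT i hi
    by_cases hij : i = j
    · subst hij; simp [hi, hdT i hi, hJii]
    · simp [hi, hdT i hi, hij, hJij j (Ne.symm hij)]
  · simp [hi, eraseDiagOn]

end Matrix

/-- In the matrix setup, if `I - Q` is invertible then so is `I - φ(Q)`, with inverse
`-(P·J·P)·(I - P·Q·P)⁻¹·D`. -/
theorem matrix_setup_inverse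
    {F : Type*} [Field F] (φ : F →+* F) {S : Type*} [Fintype S] [DecidableEq S]
    (T : Set S) (p : S → S) (hp : Function.Involutive p) (hpT : ∀ i ∈ T, p i = i)
    (P D J : Matrix S S F)
    (hP : P = Matrix.of fun i j => if j = p i then 1 else 0)
    (hDdiag : ∀ i j, i ≠ j → D i j = 0)
    (hDunit : ∀ i, IsUnit (D i i))
    (hDT : ∀ i ∈ T, D i i = 1)
    (hDp : ∀ i, D (p i) (p i) = D i i)
    (hDphi : ∀ i, φ (D i i) = (D i i)⁻¹)
    (hJphi : ∀ i j, φ (J i j) = J i j)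
    (hJT : ∀ i ∈ T, J i i = -1 ∧ ∀ j, j ≠ i → J i j = 0)
    (hJinv : J * (P * J * P) = 1)
    (D₀ J₀ Q : Matrix S S F)
    (hD₀ : D₀ = Matrix.of fun i j => if i = j ∧ i ∈ T then 0 else D i j)
    (hJ₀ : J₀ = Matrix.of fun i j => if i = j ∧ i ∈ T then 0 else J i j)
    (hQ : Q = D₀ * J₀)
    (hQinv : IsUnit (1 - Q)) :
    IsUnit (1 - Q.map φ) ∧
      (1 - Q.map φ)⁻¹ = -((P * J * P) * (1 - P * Q * P)⁻¹ * D) := by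
  open Matrix in
  set σ := hp.toPerm p
  set d : S → F := fun i => D i i
  set E : Matrix S S F := diagonal (T.indicator 1)
  have hD₀' : D₀ = eraseDiagOn T D := hD₀
  have hJ₀' : J₀ = eraseDiagOn T J := hJ₀
  have hPσ : P = σ.permMatrix F := by ext i j; simp [hP, σ, eq_comm]
  have hPP : P * P = 1 := hPσ ▸ permMatrix_mul_self_of_involutive hp
  have hE : ∀ i, T.indicator 1 i ≠ (0 : F) → σ i = i := fun i hi =>
    hpT i (Set.mem_of_indicator_ne_zero hi)
  have hDd : D = diagonal d := (IsDiag.diagonal_diag hDdiag).symm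
  have hd'T : ∀ i ∈ T, d⁻¹ i = 1 := fun i hi => by simp [d, hDT i hi]
  have hD'D : diagonal d⁻¹ * D = 1 := by
    rw [hDd, diagonal_mul_diagonal, ← diagonal_one]
    exact congrArg diagonal (funext fun i => inv_mul_cancel₀ (hDunit i).ne_zero)
  have hPD' : P * diagonal d⁻¹ = diagonal d⁻¹ * P := by
    rw [hPσ, permMatrix_mul_diagonal]
    exact congrArg (diagonal · * _) (funext fun i => by simp [d, σ, hDp])
  have hQDJ : Q = D * J + E := by
    rw [hQ, hD₀', hJ₀', hDd]
    exact eraseDiagOn_diagonal_mul_eraseDiagOn hDT hJT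
  have hQφ : Q.map φ = diagonal d⁻¹ * J + E := by
    have hDφ : D.map φ = diagonal d⁻¹ := by
      rw [hDd, diagonal_map (map_zero φ)]
      exact congrArg diagonal (funext hDphi)
    have hJφ : J.map φ = J := ext hJphi
    rw [hQ, hD₀', hJ₀', Matrix.map_mul, map_eraseDiagOn (map_zero φ),
      map_eraseDiagOn (map_zero φ), hDφ, hJφ]
    exact eraseDiagOn_diagonal_mul_eraseDiagOn hd'T hJT
  have hconj : 1 - P * Q * P = P * (1 - Q) * P := by rw [mul_sub, sub_mul, mul_one, hPP]
  have hright : (1 - Q.map φ) * -((P * J * P) * (1 - P * Q * P)⁻¹ * D) = 1 := by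
    rw [hconj, inv_conj_eq_of_mul_self_eq_one hPP, hQφ, hQDJ]
    refine one_sub_add_mul_mul_eq_one hPP hJinv
      (hPσ ▸ diagonal_mul_permMatrix_eq_self hE) (hPσ ▸ permMatrix_mul_diagonal_eq_self hE)
      (diagonal_indicator_one_mul_eq_neg hJT) hPD' (diagonal_mul_diagonal_indicator_one hd'T)
      hD'D (mul_nonsing_inv _ ?_)
    rw [← hQDJ]
    exact (isUnit_iff_isUnit_det _).mp hQinv
  exact ⟨IsUnit.of_mul_eq_one _ hright, inv_eq_right_inv hright⟩
end
end

section
/- In the matrix setup below, suppose in addition that: I − Q is invertible over F; B is a 1×S row vector and E is an S×1 column vector each of whose entries is fixed by φ; D·E = E; P·E = E; and there is a scalar c ∈ F fixed by φ with B·P·J = c·B. Then B·(I − φ(Q))^{−1}·E = −c · B·(I − Q)^{−1}·E. (In the application, c = (−1)^{n−1}, giving B(I − φ(Q))^{−1}E = (−1)^n B(I − Q)^{−1}E.) -/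
/-!
Let `E_T` be the diagonal indicator matrix of `T`. Zeroing the `T`-diagonal entries turns `D` into
`D - E_T` and `J` into `J + E_T`, so `Q = D J + E_T` and `φ(Q) = D⁻¹ J + E_T`. Since `P` commutes
with `D` and `E_T`, `(P J)² = 1` and `E_T J = -E_T`, this gives the factorization
`1 - φ(Q) = -(D⁻¹ P) (1 - Q) (P J)`, hence `(1 - φ(Q))⁻¹ = -(P J) (1 - Q)⁻¹ (P D)`.
Sandwiching between `B` and `E` and using `B P J = c B`, `P D E = E` gives the identity.
-/

open scoped Classical

open Matrix

theorem sub_mul_add_eq_mul_add {R : Type*} [Ring R] {D E J : R}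
    (hDE : D * E = E) (hEJ : E * J = -E) (hEE : E * E = E) :
    (D - E) * (J + E) = D * J + E := by
  rw [sub_mul, mul_add, mul_add, hDE, hEJ, hEE]
  abel

theorem one_sub_mul_add_eq_neg_mul_mul {R : Type*} [Ring R] {P J D D' E : R}
    (hPP : P * P = 1) (hPJ : P * J * (P * J) = 1) (hPD : P * D = D * P) (hPE : P * E = E * P)
    (hD'D : D' * D = 1) (hD'E : D' * E = E) (hEJ : E * J = -E) :
    1 - (D' * J + E) = -(D' * P) * (1 - (D * J + E)) * (P * J) := by
  symm
  calc -(D' * P) * (1 - (D * J + E)) * (P * J)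
      = -(D' * (P * P) * J) + D' * ((P * D) * (J * P * J)) + D' * ((P * E) * P * J) := by
        noncomm_ring
    _ = -(D' * (P * P) * J) + D' * ((D * P) * (J * P * J)) + D' * ((E * P) * P * J) := by
        rw [hPD, hPE]
    _ = -(D' * (P * P) * J) + D' * D * (P * J * (P * J)) + D' * E * (P * P * J) := by
        noncomm_ring
    _ = 1 - (D' * J + E) := by
        simp only [hPP, hPJ, hD'D, hD'E, mul_one, one_mul, hEJ]
        abel

theorem Matrix.inv_eq_of_eq_mul_mul {n R : Type*} [Fintype n] [DecidableEq n] [CommRing R]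
    {A A' U U' V V' : Matrix n n R} (h : A' = U * A * V) (hU : U' * U = 1) (hV : V' * V = 1) :
    A'⁻¹ = V' * A⁻¹ * U' := by
  rw [h, mul_inv_rev, mul_inv_rev, inv_eq_left_inv hU, inv_eq_left_inv hV, Matrix.mul_assoc]

theorem Matrix.IsDiag.mul_diagonal_indicator_one {n R : Type*} [Fintype n] [DecidableEq n]
    [Semiring R] {T : Set n} {D : Matrix n n R} (hD : D.IsDiag) (hDT : ∀ i ∈ T, D i i = 1) :
    D * diagonal (T.indicator 1) = diagonal (T.indicator 1) := by
  rw [← hD.diagonal_diag, diagonal_mul_diagonal]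
  congr 1
  ext i
  by_cases hi : i ∈ T <;> simp [hi, hDT]

theorem Matrix.diagonal_indicator_one_mul_of_rows {n R : Type*} [Fintype n] [DecidableEq n]
    [Ring R] {T : Set n} {J : Matrix n n R}
    (hJ : ∀ i ∈ T, J i i = -1 ∧ ∀ j, j ≠ i → J i j = 0) :
    diagonal (T.indicator 1) * J = -diagonal (T.indicator 1) := by
  ext i j
  by_cases hi : i ∈ T
  · obtain ⟨hii, hij⟩ := hJ i hi
    by_cases h : i = j
    · subst h; simp [hi, hii]
    · simp [hi, h, hij j (Ne.symm h)]
  · simp [hi, diagonal_apply]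

theorem Matrix.map_diagonal_indicator_one {n R : Type*} [DecidableEq n] [Semiring R]
    (φ : R →+* R) (T : Set n) :
    (diagonal (T.indicator 1)).map φ = diagonal (T.indicator 1) := by
  rw [diagonal_map (map_zero φ)]
  congr 1
  ext i
  by_cases hi : i ∈ T <;> simp [hi]

theorem Matrix.IsDiag.map_mul_self_eq_one {n K : Type*} [Fintype n] [DecidableEq n] [Field K]
    {D : Matrix n n K} (hD : D.IsDiag) (φ : K →+* K) (hunit : ∀ i, IsUnit (D i i))
    (hφ : ∀ i, φ (D i i) = (D i i)⁻¹) :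
    D.map φ * D = 1 := by
  rw [← hD.diagonal_diag, diagonal_map (map_zero φ), diagonal_mul_diagonal, ← diagonal_one]
  congr 1
  ext i
  simp [hφ, (hunit i).ne_zero]

theorem Matrix.of_ite_eq_sub_diagonal_indicator {n R : Type*} [DecidableEq n] [AddGroup R]
    (T : Set n) (M : Matrix n n R) :
    (of fun i j => if i = j ∧ i ∈ T then 0 else M i j) = M - diagonal (T.indicator M.diag) := by
  ext i j
  by_cases h : i = j
  · subst h; by_cases hi : i ∈ T <;> simp [hi]
  · simp [h]

theorem Matrix.of_ite_mul_of_ite_eq_mul_add {n R : Type*} [Fintype n] [DecidableEq n] [Ring R]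
    {T : Set n} {D J : Matrix n n R} (hD : D.IsDiag) (hDT : ∀ i ∈ T, D i i = 1)
    (hJT : ∀ i ∈ T, J i i = -1 ∧ ∀ j, j ≠ i → J i j = 0) :
    (of fun i j => if i = j ∧ i ∈ T then 0 else D i j) *
        (of fun i j => if i = j ∧ i ∈ T then 0 else J i j) =
      D * J + diagonal (T.indicator 1) := by
  have hDind : T.indicator D.diag = T.indicator 1 := Set.indicator_congr hDT
  have hJind : T.indicator J.diag = fun i => -T.indicator 1 i := by
    ext i; by_cases hi : i ∈ T <;> simp [hi, (hJT i _).1]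
  rw [of_ite_eq_sub_diagonal_indicator, of_ite_eq_sub_diagonal_indicator, hDind, hJind,
    ← diagonal_neg, sub_neg_eq_add]
  exact sub_mul_add_eq_mul_add (hD.mul_diagonal_indicator_one hDT)
    (diagonal_indicator_one_mul_of_rows hJT)
    ((isDiag_diagonal _).mul_diagonal_indicator_one fun i hi => by simp [hi])

theorem Equiv.Perm.permMatrix_mul_diagonal_comm {n R : Type*} [Fintype n] [DecidableEq n]
    [Semiring R] (σ : Perm n) {d : n → R} (hd : ∀ i, d (σ i) = d i) :
    σ.permMatrix R * diagonal d = diagonal d * σ.permMatrix R := by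
  ext i j
  by_cases h : σ i = j
  · subst h; simp [hd]
  · simp [h]

theorem Function.Involutive.permMatrix_mul_self {n R : Type*} [Fintype n] [DecidableEq n]
    [Semiring R] {p : n → n} (hp : Function.Involutive p) :
    (hp.toPerm p).permMatrix R * (hp.toPerm p).permMatrix R = 1 := by
  rw [← Matrix.permMatrix_mul]
  convert Matrix.permMatrix_one
  ext i
  exact hp i

theorem Function.Involutive.permMatrix_mul_diagonal_indicator_comm {n R : Type*} [Fintype n]
    [DecidableEq n] [Semiring R] {p : n → n} (hp : Function.Involutive p) {T : Set n}
    (hpT : ∀ i ∈ T, p i = i) :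
    (hp.toPerm p).permMatrix R * diagonal (T.indicator 1) =
      diagonal (T.indicator 1) * (hp.toPerm p).permMatrix R := by
  refine Equiv.Perm.permMatrix_mul_diagonal_comm _ fun i => ?_
  have hmem : p i ∈ T ↔ i ∈ T :=
    ⟨fun h => by rw [← hp i, hpT _ h]; exact h, fun h => (hpT i h).symm ▸ h⟩
  simp [Set.indicator_apply, hmem]

theorem matrix_setup_reciprocity_general
    {F : Type*} [Field F] (φ : F →+* F) {S : Type*} [Fintype S] [DecidableEq S]
    (T : Set S) (p : S → S) (hp : Function.Involutive p) (hpT : ∀ i ∈ T, p i = i)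
    (P D J : Matrix S S F)
    (hP : P = Matrix.of fun i j => if j = p i then 1 else 0)
    (hDdiag : ∀ i j, i ≠ j → D i j = 0)
    (hDunit : ∀ i, IsUnit (D i i))
    (hDT : ∀ i ∈ T, D i i = 1)
    (hDp : ∀ i, D (p i) (p i) = D i i)
    (hDphi : ∀ i, φ (D i i) = (D i i)⁻¹)
    (hJphi : ∀ i j, φ (J i j) = J i j)
    (hJT : ∀ i ∈ T, J i i = -1 ∧ ∀ j, j ≠ i → J i j = 0)
    (hJinv : J * (P * J * P) = 1)
    (D₀ J₀ Q : Matrix S S F)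
    (hD₀ : D₀ = Matrix.of fun i j => if i = j ∧ i ∈ T then 0 else D i j)
    (hJ₀ : J₀ = Matrix.of fun i j => if i = j ∧ i ∈ T then 0 else J i j)
    (hQ : Q = D₀ * J₀)
    (B : Matrix Unit S F) (E : Matrix S Unit F)
    (hDE : D * E = E) (hPE : P * E = E)
    (c : F) (hBPJ : B * P * J = c • B) :
    (B * (1 - Q.map φ)⁻¹ * E) () () = -c * ((B * (1 - Q)⁻¹ * E) () ()) := by
  set Tdiag := diagonal (T.indicator (1 : S → F))
  have hD : D.IsDiag := fun i j h => hDdiag i j h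
  have hPσ : P = (hp.toPerm p).permMatrix F := by rw [hP]; ext i j; simp [eq_comm]
  have hPP : P * P = 1 := hPσ ▸ hp.permMatrix_mul_self
  have hPD : P * D = D * P := by
    rw [hPσ, ← hD.diagonal_diag]; exact Equiv.Perm.permMatrix_mul_diagonal_comm _ hDp
  have hPT : P * Tdiag = Tdiag * P := hPσ ▸ hp.permMatrix_mul_diagonal_indicator_comm hpT
  have hPJ : P * J * (P * J) = 1 := by
    simpa only [Matrix.mul_assoc] using mul_eq_one_comm.mp hJinv
  have hQ' : Q = D * J + Tdiag := hQ ▸ hD₀ ▸ hJ₀ ▸ of_ite_mul_of_ite_eq_mul_add hD hDT hJT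
  have hQφ : Q.map φ = D.map φ * J + Tdiag := by
    rw [hQ', Matrix.map_add φ (map_add φ), Matrix.map_mul, show J.map φ = J from ext hJphi,
      map_diagonal_indicator_one]
  have hDφD : D.map φ * D = 1 := hD.map_mul_self_eq_one φ hDunit hDphi
  have hDφT : D.map φ * Tdiag = Tdiag :=
    (hD.map (map_zero φ)).mul_diagonal_indicator_one fun i hi => by simp [hDT i hi]
  have hfactor : 1 - Q.map φ = -(D.map φ * P) * (1 - Q) * (P * J) := by
    rw [hQφ, hQ']
    exact one_sub_mul_add_eq_neg_mul_mul hPP hPJ hPD hPT hDφD hDφT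
      (diagonal_indicator_one_mul_of_rows hJT)
  have hinv : (1 - Q.map φ)⁻¹ = P * J * (1 - Q)⁻¹ * -(P * D) := by
    refine inv_eq_of_eq_mul_mul hfactor ?_ hPJ
    rw [neg_mul_neg, Matrix.mul_assoc, ← Matrix.mul_assoc D, mul_eq_one_comm.mp hDφD,
      Matrix.one_mul, hPP]
  calc (B * (1 - Q.map φ)⁻¹ * E) () ()
      = (-(B * P * J * (1 - Q)⁻¹ * (P * (D * E)))) () () := by
        simp only [hinv, Matrix.mul_neg, Matrix.neg_mul, Matrix.mul_assoc]
    _ = -c * ((B * (1 - Q)⁻¹ * E) () ()) := by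
        rw [hDE, hPE, hBPJ]; simp [Matrix.smul_mul]

/-- **Reciprocity in the matrix setup:** with `I - Q` invertible, `B`, `E` vectors with
entries fixed by `φ`, `D·E = E`, `P·E = E`, and `B·P·J = c·B` for a scalar `c` fixed by
`φ`, one has `B·(I - φ(Q))⁻¹·E = -c·B·(I - Q)⁻¹·E`. -/
theorem matrix_setup_reciprocity
    {F : Type*} [Field F] (φ : F →+* F) {S : Type*} [Fintype S] [DecidableEq S]
    (T : Set S) (p : S → S) (hp : Function.Involutive p) (hpT : ∀ i ∈ T, p i = i)
    (P D J : Matrix S S F)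
    (hP : P = Matrix.of fun i j => if j = p i then 1 else 0)
    (hDdiag : ∀ i j, i ≠ j → D i j = 0)
    (hDunit : ∀ i, IsUnit (D i i))
    (hDT : ∀ i ∈ T, D i i = 1)
    (hDp : ∀ i, D (p i) (p i) = D i i)
    (hDphi : ∀ i, φ (D i i) = (D i i)⁻¹)
    (hJphi : ∀ i j, φ (J i j) = J i j)
    (hJT : ∀ i ∈ T, J i i = -1 ∧ ∀ j, j ≠ i → J i j = 0)
    (hJinv : J * (P * J * P) = 1)
    (D₀ J₀ Q : Matrix S S F)
    (hD₀ : D₀ = Matrix.of fun i j => if i = j ∧ i ∈ T then 0 else D i j)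
    (hJ₀ : J₀ = Matrix.of fun i j => if i = j ∧ i ∈ T then 0 else J i j)
    (hQ : Q = D₀ * J₀)
    (hQinv : IsUnit (1 - Q))
    (B : Matrix Unit S F) (E : Matrix S Unit F)
    (hBphi : ∀ j, φ (B () j) = B () j) (hEphi : ∀ i, φ (E i ()) = E i ())
    (hDE : D * E = E) (hPE : P * E = E)
    (c : F) (hc : φ c = c) (hBPJ : B * P * J = c • B) :
    (B * (1 - Q.map φ)⁻¹ * E) () () = -c * ((B * (1 - Q)⁻¹ * E) () ()) :=
  matrix_setup_reciprocity_general φ T p hp hpT P D J hP hDdiag hDunit hDT hDp hDphi hJphi hJT hJinv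
    D₀ J₀ Q hD₀ hJ₀ hQ B E hDE hPE c hBPJ
end

section
/- Let M be a deterministic finite automaton over a finite alphabet A with finite state set, let I be a finite set, and let w : A → ℕ^I be a weight function with w(a) ≠ 0 for every a ∈ A. For a word u = a₁⋯a_k define its weight w(u) = w(a₁)+⋯+w(a_k) ∈ ℕ^I. Then for each m ∈ ℕ^I there are only finitely many accepted words of weight m, and the multivariate generating function F = ∑_{u accepted by M} ∏_{i ∈ I} t_i^{w(u)_i} ∈ ℚ⟦t_i : i ∈ I⟧ is rational: there exist polynomials P, Q ∈ ℚ[t_i : i ∈ I] with Q having nonzero constant term such that Q·F = P in ℚ⟦t_i : i ∈ I⟧. -/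
open scoped Classical

noncomputable section

/-- The multivariate weight generating function `F = ∑_{u accepted} ∏_i t_i^{w(u)_i}` of a
DFA `M` with weight function `w` on letters, extended additively to words: the coefficient
of the monomial `m` is the number of accepted words of weight `m`. -/
def dfaWeightSeries {A S : Type*} (M : DFA A S) {I : Type*} (w : A → I →₀ ℕ) :
    MvPowerSeries I ℚ :=
  fun m => (Nat.card {u : List A // u ∈ M.accepts ∧ (u.map w).sum = m} : ℚ)

/-!
Split accepted words by their first letter: if `F_s` is the generating series of the words
accepted from state `s`, then `F_s = [s accepting] + ∑_a t^{w(a)} F_{δ(s,a)}`. In vector form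
`(1 - T) F = e` for the transfer matrix `T` of the automaton, whose entries are polynomials
without constant term because no letter has weight zero. Hence `det (1 - T)` has constant
term `1`, and Cramer's rule `det (1 - T) • F = adj (1 - T) e` exhibits `F_{s₀}` as a quotient
of polynomials.
-/

open MvPowerSeries Matrix

def List.subtypeEquivNilSumCons {A : Type*} (p : List A → Prop) :
    {u // p u} ≃ PLift (p []) ⊕ Σ a, {v // p (a :: v)} where
  toFun
    | ⟨[], h⟩ => .inl ⟨h⟩
    | ⟨a :: v, h⟩ => .inr ⟨a, v, h⟩
  invFun
    | .inl ⟨h⟩ => ⟨[], h⟩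
    | .inr ⟨a, v, h⟩ => ⟨a :: v, h⟩
  left_inv := by rintro ⟨_ | ⟨a, v⟩, h⟩ <;> rfl
  right_inv := by rintro (⟨h⟩ | ⟨a, v, h⟩) <;> rfl

theorem List.natCard_subtype_eq_ite_add_sum {A : Type*} [Fintype A] (p : List A → Prop)
    [∀ a, Finite {v // p (a :: v)}] :
    Nat.card {u // p u} = (if p [] then 1 else 0) + ∑ a, Nat.card {v // p (a :: v)} := by
  rw [Nat.card_congr (List.subtypeEquivNilSumCons p), Nat.card_sum, Nat.card_sigma]
  split_ifs with h
  · have : Unique (PLift (p [])) := ⟨⟨⟨h⟩⟩, fun _ ↦ rfl⟩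
    rw [Nat.card_unique]
  · have : IsEmpty (PLift (p [])) := ⟨fun ⟨h'⟩ ↦ h h'⟩
    rw [Nat.card_of_isEmpty]

theorem List.length_le_degree_sum_map {A I : Type*} {w : A → I →₀ ℕ} (hw : ∀ a, w a ≠ 0)
    (u : List A) : u.length ≤ (u.map w).sum.degree := by
  calc u.length = (u.map (Finsupp.degree ∘ w)).length := by simp
    _ ≤ (u.map (Finsupp.degree ∘ w)).sum :=
      List.length_le_sum_of_one_le _ <| by
        simpa [Nat.one_le_iff_ne_zero, Finsupp.degree_eq_zero_iff] using fun a _ ↦ hw a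
    _ = (u.map w).sum.degree := by rw [map_list_sum, List.map_map]

theorem List.finite_setOf_sum_map_eq {A I : Type*} [Finite A] {w : A → I →₀ ℕ}
    (hw : ∀ a, w a ≠ 0) (m : I →₀ ℕ) : {u : List A | (u.map w).sum = m}.Finite :=
  (List.finite_length_le A m.degree).subset fun u hu ↦ by
    simpa [← hu.out] using u.length_le_degree_sum_map hw

theorem natCard_subtype_add_eq_ite {X I : Type*} (q : X → Prop) (g : X → I →₀ ℕ)
    (n m : I →₀ ℕ) :
    Nat.card {x // q x ∧ n + g x = m} =
      if n ≤ m then Nat.card {x // q x ∧ g x = m - n} else 0 := by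
  split_ifs with h
  · refine Nat.card_congr (Equiv.subtypeEquivRight fun x ↦ ?_)
    rw [add_comm, eq_tsub_iff_add_eq_of_le h]
  · have : IsEmpty {x // q x ∧ n + g x = m} :=
      ⟨fun ⟨_, _, hx⟩ ↦ h (hx ▸ le_self_add)⟩
    exact Nat.card_of_isEmpty

section CramerRule

variable {R R' n : Type*} [CommRing R] [CommRing R'] [Fintype n] [DecidableEq n] (f : R →+* R')

theorem RingHom.map_det_one_sub_eq_one {T : Matrix n n R} (hT : T.map f = 0) :
    f (1 - T).det = 1 := by
  rw [f.map_det, map_sub, map_one, RingHom.mapMatrix_apply, hT, sub_zero, det_one]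

theorem RingHom.map_det_one_sub_smul_eq {T : Matrix n n R} {e : n → R} {F : n → R'}
    (hF : F = f ∘ e + T.map f *ᵥ F) :
    f (1 - T).det • F = f ∘ ((1 - T).adjugate *ᵥ e) := by
  have hsystem : f.mapMatrix (1 - T) *ᵥ F = f ∘ e := by
    rw [map_sub, map_one, sub_mulVec, one_mulVec, RingHom.mapMatrix_apply]
    exact sub_eq_iff_eq_add.mpr hF
  calc f (1 - T).det • F = ((f.mapMatrix (1 - T)).adjugate * f.mapMatrix (1 - T)) *ᵥ F := by
        rw [adjugate_mul, smul_mulVec, one_mulVec, f.map_det]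
    _ = (f.mapMatrix (1 - T)).adjugate *ᵥ (f ∘ e) := by rw [← mulVec_mulVec, hsystem]
    _ = f ∘ ((1 - T).adjugate *ᵥ e) := by
        rw [← f.map_adjugate]
        exact funext fun i ↦ (f.map_mulVec _ _ i).symm

end CramerRule

namespace DFA

variable {A S I : Type*} (R : Type*) [CommSemiring R] (M : DFA A S) (w : A → I →₀ ℕ)

def weightSeriesFrom (s : S) : MvPowerSeries I R :=
  fun m ↦ Nat.card {u // u ∈ M.acceptsFrom s ∧ (u.map w).sum = m}

def transferMatrix [Fintype A] : Matrix S S (MvPolynomial I R) :=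
  Matrix.of fun s t ↦ ∑ a with M.step s a = t, MvPolynomial.monomial (w a) 1

variable {R}

theorem coeff_weightSeriesFrom (s : S) (m : I →₀ ℕ) :
    coeff m (M.weightSeriesFrom R w s) =
      Nat.card {u // u ∈ M.acceptsFrom s ∧ (u.map w).sum = m} :=
  rfl

variable [Fintype A]

theorem weightSeriesFrom_eq (hw : ∀ a, w a ≠ 0) (s : S) :
    M.weightSeriesFrom R w s = (if s ∈ M.accept then 1 else 0) +
      ∑ a, monomial (w a) 1 * M.weightSeriesFrom R w (M.step s a) := by
  ext m
  have hfinite (a : A) :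
      Finite {v // a :: v ∈ M.acceptsFrom s ∧ ((a :: v).map w).sum = m} :=
    Set.Finite.to_subtype <| (List.finite_length_le A m.degree).subset fun v hv ↦
      (Nat.le_succ _).trans (hv.2 ▸ (a :: v).length_le_degree_sum_map hw)
  rw [coeff_weightSeriesFrom, List.natCard_subtype_eq_ite_add_sum, Nat.cast_add, Nat.cast_sum,
    map_add, map_sum]
  congr 1
  · by_cases hs : s ∈ M.accept <;> simp [hs, mem_acceptsFrom, coeff_one, eq_comm]
  · refine Finset.sum_congr rfl fun a _ ↦ ?_
    rw [coeff_monomial_mul, one_mul, coeff_weightSeriesFrom]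
    simp only [List.map_cons, List.sum_cons, natCard_subtype_add_eq_ite, Nat.cast_ite,
      Nat.cast_zero]
    rfl

theorem transferMatrix_map_mulVec [Fintype S] (F : S → MvPowerSeries I R) (s : S) :
    ((M.transferMatrix R w).map MvPolynomial.coeToMvPowerSeries.ringHom *ᵥ F) s =
      ∑ a, monomial (w a) 1 * F (M.step s a) := by
  calc ((M.transferMatrix R w).map MvPolynomial.coeToMvPowerSeries.ringHom *ᵥ F) s
      = ∑ t, ∑ a with M.step s a = t, monomial (w a) 1 * F t := by
        simp [transferMatrix, mulVec, dotProduct, Finset.sum_mul]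
    _ = ∑ t, ∑ a with M.step s a = t, monomial (w a) 1 * F (M.step s a) :=
        Finset.sum_congr rfl fun t _ ↦ Finset.sum_congr rfl fun a ha ↦ by
          rw [(Finset.mem_filter.1 ha).2]
    _ = ∑ a, monomial (w a) 1 * F (M.step s a) := Finset.sum_fiberwise _ _ _

theorem transferMatrix_map_constantCoeff (hw : ∀ a, w a ≠ 0) :
    (M.transferMatrix R w).map MvPolynomial.constantCoeff = 0 := by
  ext s t
  simp [transferMatrix, MvPolynomial.constantCoeff_monomial, hw]

end DFA

theorem dfa_weighted_generating_function_rational_general {A S : Type*} [Fintype A] [Fintype S]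
    (M : DFA A S) {I : Type*} (w : A → I →₀ ℕ) (hw : ∀ a, w a ≠ 0) :
    (∀ m : I →₀ ℕ, {u : List A | u ∈ M.accepts ∧ (u.map w).sum = m}.Finite) ∧
    ∃ P Q : MvPolynomial I ℚ, MvPolynomial.constantCoeff Q ≠ 0 ∧
      (Q : MvPowerSeries I ℚ) * dfaWeightSeries M w = (P : MvPowerSeries I ℚ) := by
  let T := M.transferMatrix ℚ w
  let e : S → MvPolynomial I ℚ := fun s ↦ if s ∈ M.accept then 1 else 0
  let toSeries : MvPolynomial I ℚ →+* MvPowerSeries I ℚ :=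
    MvPolynomial.coeToMvPowerSeries.ringHom
  have hsystem :
      M.weightSeriesFrom ℚ w = toSeries ∘ e + T.map toSeries *ᵥ M.weightSeriesFrom ℚ w := by
    funext s
    rw [M.weightSeriesFrom_eq w hw, Pi.add_apply, M.transferMatrix_map_mulVec]
    simp [e, toSeries, apply_ite]
  refine ⟨fun m ↦ (List.finite_setOf_sum_map_eq hw m).subset fun _ hu ↦ hu.2,
    ((1 - T).adjugate *ᵥ e) M.start, (1 - T).det, ?_, ?_⟩
  · rw [RingHom.map_det_one_sub_eq_one _ (M.transferMatrix_map_constantCoeff w hw)]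
    exact one_ne_zero
  · exact congrFun (toSeries.map_det_one_sub_smul_eq hsystem) M.start

/-- **Rationality of the multivariate weight generating function of a regular language.**
Let `M` be a DFA with finite alphabet `A` and finite state set, `I` a finite set, and
`w : A → ℕ^I` a weight function with `w a ≠ 0` for all `a`, extended to words by
`w(a₁⋯a_k) = w a₁ + ⋯ + w a_k`. Then each weight is attained by only finitely many
accepted words, and the multivariate generating function
`F = ∑_{u accepted} ∏_i t_i^{w(u)_i}` is rational: `Q·F = P` with `P, Q` multivariate
polynomials, `Q` with nonzero constant term. -/
theorem dfa_weighted_generating_function_rational {A S : Type*} [Fintype A] [Fintype S]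
    (M : DFA A S) {I : Type*} [Fintype I] (w : A → I →₀ ℕ) (hw : ∀ a, w a ≠ 0) :
    (∀ m : I →₀ ℕ, {u : List A | u ∈ M.accepts ∧ (u.map w).sum = m}.Finite) ∧
    ∃ P Q : MvPolynomial I ℚ, MvPolynomial.constantCoeff Q ≠ 0 ∧
      (Q : MvPowerSeries I ℚ) * dfaWeightSeries M w = (P : MvPowerSeries I ℚ) :=
  dfa_weighted_generating_function_rational_general M w hw
end
end
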